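/- Let S = {x ∈ ℝ^d : q_1(x) ≥ 0, …, q_k(x) ≥ 0} for real polynomials q_1, …, q_k in d variables, and let s ∈ ℕ be such that for every x ∈ S at most s of the polynomials q_1, …, q_k vanish at x. For i = 1, …, s define the polynomial p_i(x) := σ_{k−s+i}(q_1(x), …, q_k(x)). Then S ⊆ {x ∈ ℝ^d : p_1(x) ≥ 0, …, p_s(x) ≥ 0}, and for every x ∈ S there exists ε > 0 such that S ∩ B(x, ε) = {y ∈ ℝ^d : p_1(y) ≥ 0, …, p_s(y) ≥ 0} ∩ B(x, ε). -/

import Mathlib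

open MvPolynomial Filter

/-- Evaluation of a `d`-variate real polynomial at a point of `ℝ^d`. -/
noncomputable def pev {d : ℕ} (p : MvPolynomial (Fin d) ℝ) (x : EuclideanSpace ℝ (Fin d)) : ℝ :=
  MvPolynomial.eval (fun i => x i) p

/-- A basic closed semialgebraic set in `ℝ^d`. -/
def IsBasicClosed {d : ℕ} (S : Set (EuclideanSpace ℝ (Fin d))) : Prop :=
  ∃ (k : ℕ) (q : Fin k → MvPolynomial (Fin d) ℝ), S = {x | ∀ i, 0 ≤ pev (q i) x}

/-- A closed semialgebraic set: a finite union of basic closed semialgebraic sets. -/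
def IsClosedSemialg {d : ℕ} (S : Set (EuclideanSpace ℝ (Fin d))) : Prop :=
  ∃ (n : ℕ) (F : Fin n → Set (EuclideanSpace ℝ (Fin d))),
    (∀ i, IsBasicClosed (F i)) ∧ S = ⋃ i, F i

/-- The `i`-th elementary symmetric function of `a 0, …, a (k-1)`. -/
noncomputable def esymmVal {k : ℕ} (a : Fin k → ℝ) (i : ℕ) : ℝ :=
  ∑ t ∈ Finset.powersetCard i (Finset.univ : Finset (Fin k)), ∏ j ∈ t, a j

/-
If at most `s` of the `qⱼ` vanish at `x ∈ S`, then `σ_i(q(x)) > 0` for all `i ≤ k - s`, and by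
continuity this persists on a ball around `x`. On that ball the conditions `p₁, …, p_s ≥ 0` make
every `σ_i(q(y))` nonnegative, and a real vector whose elementary symmetric functions are all
nonnegative is itself nonnegative: otherwise, with `β := -minⱼ qⱼ(y) > 0`,
`0 = ∏ⱼ (qⱼ(y) + β) = ∑ᵢ σ_i(q(y)) β^(k-i) ≥ β^k > 0`.
-/

open Metric

section ElementarySymmetric

variable {k : ℕ}

lemma esymmVal_zero (a : Fin k → ℝ) : esymmVal a 0 = 1 := by
  simp [esymmVal]

lemma esymmVal_nonneg {a : Fin k → ℝ} (ha : ∀ j, 0 ≤ a j) (i : ℕ) : 0 ≤ esymmVal a i :=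
  Finset.sum_nonneg fun _ _ => Finset.prod_nonneg fun j _ => ha j

lemma prod_add_eq_sum_esymmVal (a : Fin k → ℝ) (β : ℝ) :
    ∏ j, (a j + β) = ∑ i ∈ Finset.range (k + 1), esymmVal a i * β ^ (k - i) := by
  classical
  rw [Finset.prod_add, Finset.powerset_card_disjiUnion]
  erw [Finset.sum_disjiUnion]
  rw [Finset.card_univ, Fintype.card_fin]
  refine Finset.sum_congr rfl fun i _ => ?_
  rw [esymmVal, Finset.sum_mul]
  refine Finset.sum_congr rfl fun t ht => ?_
  obtain ⟨-, htcard⟩ := Finset.mem_powersetCard.mp ht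
  rw [Finset.prod_const, Finset.card_sdiff_of_subset (Finset.subset_univ t), htcard,
    Finset.card_univ, Fintype.card_fin]

lemma nonneg_of_esymmVal_nonneg {a : Fin k → ℝ} (ha : ∀ i ≤ k, 0 ≤ esymmVal a i) (j : Fin k) :
    0 ≤ a j := by
  by_contra! hj
  obtain ⟨jmin, -, hjmin⟩ := Finset.exists_min_image Finset.univ a ⟨j, Finset.mem_univ j⟩
  set β := -a jmin
  have hβ : 0 < β := by linarith [hjmin j (Finset.mem_univ j)]
  have hprod : ∏ j, (a j + β) = 0 := Finset.prod_eq_zero (Finset.mem_univ jmin) (by simp [β])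
  have hsum : β ^ k ≤ ∑ i ∈ Finset.range (k + 1), esymmVal a i * β ^ (k - i) := by
    have hterm := Finset.single_le_sum (f := fun i => esymmVal a i * β ^ (k - i))
      (fun i hi => mul_nonneg (ha i (Nat.lt_succ_iff.mp (Finset.mem_range.mp hi)))
        (pow_nonneg hβ.le _)) (Finset.mem_range.mpr k.succ_pos)
    simpa [esymmVal_zero] using hterm
  rw [← prod_add_eq_sum_esymmVal, hprod] at hsum
  exact (pow_pos hβ k).not_ge hsum

lemma esymmVal_pos {s : ℕ} {a : Fin k → ℝ} (ha : ∀ j, 0 ≤ a j)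
    (hzeros : Set.ncard {j | a j = 0} ≤ s) {i : ℕ} (hi : i ≤ k - s) : 0 < esymmVal a i := by
  classical
  have hZ : {j | a j = 0} = ↑(Finset.univ.filter fun j => a j = 0) := by ext; simp
  rw [hZ, Set.ncard_coe_finset] at hzeros
  have hsplit := Finset.card_filter_add_card_filter_not (s := Finset.univ) (fun j => a j = 0)
  rw [Finset.card_univ, Fintype.card_fin] at hsplit
  obtain ⟨T, hTP, hTcard⟩ := Finset.exists_subset_card_eq
    (s := Finset.univ.filter fun j => ¬a j = 0) (n := i) (by omega)
  have hT : 0 < ∏ j ∈ T, a j := Finset.prod_pos fun j hj =>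
    (ha j).lt_of_ne (Ne.symm (Finset.mem_filter.mp (hTP hj)).2)
  exact hT.trans_le <| Finset.single_le_sum (f := fun t => ∏ j ∈ t, a j)
    (fun t _ => Finset.prod_nonneg fun j _ => ha j)
    (Finset.mem_powersetCard.mpr ⟨Finset.subset_univ T, hTcard⟩)

end ElementarySymmetric

lemma continuous_pev {d : ℕ} (p : MvPolynomial (Fin d) ℝ) : Continuous (pev p) :=
  (MvPolynomial.continuous_eval p).comp (continuous_pi fun i => (EuclideanSpace.proj i).continuous)

lemma Continuous.esymmVal {X : Type*} [TopologicalSpace X] {k : ℕ} {f : Fin k → X → ℝ}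
    (hf : ∀ j, Continuous (f j)) (i : ℕ) : Continuous fun x => esymmVal (fun j => f j x) i :=
  continuous_finsetSum _ fun _ _ => continuous_finsetProd _ fun j _ => hf j

/-- Let `S = {q₁ ≥ 0, …, q_k ≥ 0}` and suppose at every point of `S` at most `s` of the
`qᵢ` vanish. With `pᵢ(x) := σ_{k-s+i}(q₁(x), …, q_k(x))` for `i = 1, …, s`, one has
`S ⊆ {p₁ ≥ 0, …, p_s ≥ 0}` and around every point of `S` the two sets coincide. -/
theorem esymm_local_representation {d k s : ℕ}
    (S : Set (EuclideanSpace ℝ (Fin d)))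
    (q : Fin k → MvPolynomial (Fin d) ℝ)
    (hS : S = {x | ∀ i, 0 ≤ pev (q i) x})
    (hvanish : ∀ x ∈ S, Set.ncard {i : Fin k | pev (q i) x = 0} ≤ s) :
    (S ⊆ {x | ∀ i : Fin s, 0 ≤ esymmVal (fun j => pev (q j) x) (k - s + (i : ℕ) + 1)}) ∧
    ∀ x ∈ S, ∃ ε > (0 : ℝ),
      S ∩ Metric.closedBall x ε =
        {y | ∀ i : Fin s, 0 ≤ esymmVal (fun j => pev (q j) y) (k - s + (i : ℕ) + 1)} ∩
          Metric.closedBall x ε := by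
  subst hS
  have hsub := fun x (hx : ∀ j, 0 ≤ pev (q j) x) (i : Fin s) => esymmVal_nonneg hx (k - s + i + 1)
  refine ⟨hsub, fun x hx => ?_⟩
  have hlow : ∀ᶠ y in nhds x, ∀ i ∈ Finset.range (k - s + 1),
      0 < esymmVal (fun j => pev (q j) y) i :=
    (Filter.eventually_all_finset _).mpr fun i hi =>
      ((Continuous.esymmVal (fun j => continuous_pev (q j)) i).tendsto x).eventually_const_lt
        (esymmVal_pos hx (hvanish x hx) (Nat.lt_succ_iff.mp (Finset.mem_range.mp hi)))
  obtain ⟨ε, hε, hball⟩ := nhds_basis_closedBall.eventually_iff.mp hlow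
  refine ⟨ε, hε, Set.Subset.antisymm (Set.inter_subset_inter_left _ hsub) ?_⟩
  rintro y ⟨hhigh, hy⟩
  refine ⟨nonneg_of_esymmVal_nonneg fun i hik => ?_, hy⟩
  rcases le_or_gt i (k - s) with hi | hi
  · exact (hball hy i (Finset.mem_range.mpr (Nat.lt_succ_of_le hi))).le
  · simpa [show k - s + (i - (k - s) - 1) + 1 = i by omega] using
      hhigh ⟨i - (k - s) - 1, by omega⟩
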